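/- arXiv:2601.05153 — 4 statements merged into one kernel-verified Lean document; each statement's English description precedes it below -/
import Mathlib

section
/- Fix s ∈ (0,1) and f ∈ W^{1,1}(R^n) ∩ W^{1,∞}(R^n). For a.e. ξ ∈ S^{n−1}, the gauge of the s-fractional L^p polar projection body converges as p → ∞ to the gauge of the s-fractional L^∞ polar projection body: lim_{p→∞} (p(1−s) ∫_0^∞ t^{−sp−1} ∫_{R^n} |f(x+tξ)−f(x)|^p dx dt)^{1/(sp)} = (sup_{x,t>0} t^{−s}|f(x+tξ)−f(x)|)^{1/s}. -/
/-!
If `t^{-s} |f(x + tξ) - f x| ≤ M` for all `x` and `t > 0`, then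
`|f(x + tξ) - f x|^p ≤ (M t^s)^{p-1} |f(x + tξ) - f x|`, so the `p`-energy is at most `M^{p-1}`
times the (finite) energy at `p = 1`. Conversely, if `t₀^{-s} |f(x₀ + t₀ξ) - f x₀| > m`, continuity
keeps `|f(x + tξ) - f x| ≥ m t^s` on a product `U × (t₀, r)` with `0 < |U| < ∞`, and integrating
`t^{-sp-1} (m t^s)^p = m^p / t` over it bounds the `p`-energy below by `m^p K` with `K` independent
of `p`. Since `(p c K a^{p+d})^{1/(sp)} → a^{1/s}`, the two bounds squeeze the limit.
-/

open MeasureTheory Set NNReal ENNReal Filter Topology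

theorem tendsto_mul_rpow_one_div_mul_self {c s : ℝ} (hc : 0 < c) (hs : 0 < s) :
    Tendsto (fun p : ℝ => (p * c) ^ (1 / (s * p))) atTop (𝓝 1) := by
  refine ((tendsto_rpow_div_mul_add c s 0 hs.ne).comp
    (tendsto_id.atTop_mul_const hc)).congr' ?_
  filter_upwards [eventually_gt_atTop 0] with p hp
  simp only [Function.comp_apply, id, add_zero]
  congr 1
  field_simp

theorem tendsto_mul_rpow_add_mul_rpow_one_div {c s a k : ℝ} (hc : 0 < c) (hs : 0 < s)
    (ha : 0 ≤ a) (hk : 0 < k) (d : ℝ) :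
    Tendsto (fun p : ℝ => (p * c * (a ^ (p + d) * k)) ^ (1 / (s * p))) atTop
      (𝓝 (a ^ (1 / s))) := by
  rcases ha.eq_or_lt with rfl | ha
  · rw [Real.zero_rpow (by positivity)]
    refine tendsto_const_nhds.congr' ?_
    filter_upwards [eventually_gt_atTop (max 0 (-d))] with p hp
    obtain ⟨hp, hpd⟩ := max_lt_iff.mp hp
    rw [Real.zero_rpow (by linarith), zero_mul, mul_zero, Real.zero_rpow (by positivity)]
  have hexp : Tendsto (fun p : ℝ => (p + d) / (s * p)) atTop (𝓝 (1 / s)) := by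
    have := (tendsto_inv_atTop_zero.const_mul (d / s)).const_add (1 / s)
    rw [mul_zero, add_zero] at this
    refine this.congr' ?_
    filter_upwards [eventually_gt_atTop 0] with p hp
    field_simp
  have hzero : Tendsto (fun p : ℝ => 1 / (s * p)) atTop (𝓝 0) :=
    tendsto_const_nhds.div_atTop (tendsto_id.const_mul_atTop hs)
  have hlim := (tendsto_mul_rpow_one_div_mul_self hc hs).mul
    ((tendsto_const_nhds.rpow hexp (Or.inl ha.ne')).mul
      (tendsto_const_nhds.rpow hzero (Or.inl hk.ne')))
  rw [Real.rpow_zero, one_mul, mul_one] at hlim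
  refine hlim.congr' ?_
  filter_upwards [eventually_gt_atTop 0] with p hp
  rw [Real.mul_rpow (x := p * c) (by positivity) (by positivity),
    Real.mul_rpow (by positivity) hk.le, ← Real.rpow_mul ha.le, mul_one_div]

theorem tendsto_ofReal_mul_rpow_add_mul_rpow_one_div {c s a : ℝ} (hc : 0 < c) (hs : 0 < s)
    (ha : 0 ≤ a) (d : ℝ) {K : ℝ≥0∞} (hK0 : K ≠ 0) (hK : K ≠ ⊤) :
    Tendsto (fun p : ℝ =>
        (ENNReal.ofReal (p * c) * (ENNReal.ofReal (a ^ (p + d)) * K)) ^ (1 / (s * p)))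
      atTop (𝓝 (ENNReal.ofReal a ^ (1 / s))) := by
  have hk : 0 < K.toReal := ENNReal.toReal_pos hK0 hK
  rw [ENNReal.ofReal_rpow_of_nonneg ha (by positivity)]
  refine (ENNReal.continuous_ofReal.tendsto _).comp
    (tendsto_mul_rpow_add_mul_rpow_one_div hc hs ha hk d) |>.congr' ?_
  filter_upwards [eventually_gt_atTop 0] with p hp
  rw [Function.comp_apply, ← ENNReal.ofReal_rpow_of_nonneg (by positivity) (by positivity),
    ENNReal.ofReal_mul (p := p * c) (by positivity),
    ENNReal.ofReal_mul (p := a ^ (p + d)) (by positivity), ENNReal.ofReal_toReal hK]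

theorem rpow_neg_mul_sub_one_mul_mul_rpow {s t m : ℝ} (ht : 0 < t) (hm : 0 ≤ m) (p : ℝ) :
    t ^ (-s * p - 1) * (m * t ^ s) ^ p = m ^ p * t⁻¹ := by
  rw [Real.mul_rpow hm (by positivity), ← Real.rpow_mul ht.le, mul_left_comm,
    ← Real.rpow_add ht, ← Real.rpow_neg_one t]
  ring_nf

theorem rpow_neg_mul_sub_one_mul_rpow_le {s t v M p : ℝ} (ht : 0 < t) (hv : 0 ≤ v)
    (hvM : v ≤ M * t ^ s) (hp : 1 ≤ p) :
    t ^ (-s * p - 1) * v ^ p ≤ M ^ (p - 1) * (t ^ (-s - 1) * v) := by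
  have hM : 0 ≤ M := (mul_nonneg_iff_of_pos_right (by positivity)).mp (hv.trans hvM)
  calc t ^ (-s * p - 1) * v ^ p = t ^ (-s * p - 1) * v ^ (p - 1) * v := by
        rw [mul_assoc, ← Real.rpow_add_one' hv (by linarith), sub_add_cancel]
    _ ≤ t ^ (-s * p - 1) * (M * t ^ s) ^ (p - 1) * v := by gcongr
    _ = M ^ (p - 1) * (t ^ (-s - 1) * v) := by
        rw [Real.mul_rpow hM (by positivity), ← Real.rpow_mul ht.le, mul_left_comm,
          ← Real.rpow_add ht]
        ring_nf

section

variable {X : Type*}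

noncomputable def fractionalSup (u : X → ℝ → ℝ) (s : ℝ) : ℝ≥0∞ :=
  ⨆ (x : X) (t : {t : ℝ // 0 < t}), ENNReal.ofReal ((t : ℝ) ^ (-s) * u x t)

theorem le_toReal_fractionalSup_mul_rpow {u : X → ℝ → ℝ} {s : ℝ} (hsup : fractionalSup u s ≠ ⊤)
    (x : X) {t : ℝ} (ht : 0 < t) : u x t ≤ (fractionalSup u s).toReal * t ^ s := by
  have h : t ^ (-s) * u x t ≤ (fractionalSup u s).toReal :=
    (ENNReal.ofReal_le_iff_le_toReal hsup).mp
      (le_iSup₂ (f := fun (x : X) (t : {t : ℝ // 0 < t}) =>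
        ENNReal.ofReal ((t : ℝ) ^ (-s) * u x t)) x ⟨t, ht⟩)
  rwa [Real.rpow_neg ht.le, inv_mul_le_iff₀ (by positivity), mul_comm] at h

variable [MeasurableSpace X]

noncomputable def fractionalEnergy (μ : Measure X) (u : X → ℝ → ℝ) (s p : ℝ) : ℝ≥0∞ :=
  ∫⁻ t in Ioi (0 : ℝ), ENNReal.ofReal (t ^ (-s * p - 1)) * ∫⁻ x, ENNReal.ofReal (u x t ^ p) ∂μ

variable {μ : Measure X} {u : X → ℝ → ℝ} {s : ℝ}

theorem fractionalEnergy_one : fractionalEnergy μ u s 1 =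
    ∫⁻ t in Ioi (0 : ℝ), ENNReal.ofReal (t ^ (-s - 1)) * ∫⁻ x, ENNReal.ofReal (u x t) ∂μ := by
  simp [fractionalEnergy]

theorem fractionalEnergy_le_rpow_mul_fractionalEnergy_one {M p : ℝ} (hu : ∀ x t, 0 ≤ u x t)
    (hM : ∀ x, ∀ t > 0, u x t ≤ M * t ^ s) (hp : 1 ≤ p) :
    fractionalEnergy μ u s p ≤ ENNReal.ofReal (M ^ (p - 1)) * fractionalEnergy μ u s 1 := by
  rw [fractionalEnergy_one, fractionalEnergy, ← lintegral_const_mul' _ _ ENNReal.ofReal_ne_top]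
  refine setLIntegral_mono' measurableSet_Ioi fun t (ht : 0 < t) => ?_
  rw [← lintegral_const_mul' _ _ ENNReal.ofReal_ne_top,
    ← lintegral_const_mul' _ _ ENNReal.ofReal_ne_top,
    ← lintegral_const_mul' _ _ ENNReal.ofReal_ne_top]
  refine lintegral_mono fun x => ?_
  rw [← ENNReal.ofReal_mul (by positivity), ← ENNReal.ofReal_mul (by positivity),
    ← ENNReal.ofReal_mul' (by positivity [hu x t])]
  exact ENNReal.ofReal_le_ofReal
    (rpow_neg_mul_sub_one_mul_rpow_le ht (hu x t) (hM x t ht) hp)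

theorem ofReal_rpow_mul_inv_mul_measure_le_mul_lintegral {W : Set X} (hW : MeasurableSet W)
    {t m p : ℝ} (ht : 0 < t) (hm : 0 ≤ m) (hp : 0 ≤ p) (hbound : ∀ x ∈ W, m * t ^ s ≤ u x t) :
    ENNReal.ofReal (m ^ p * t⁻¹) * μ W ≤
      ENNReal.ofReal (t ^ (-s * p - 1)) * ∫⁻ x, ENNReal.ofReal (u x t ^ p) ∂μ :=
  calc ENNReal.ofReal (m ^ p * t⁻¹) * μ W
      = ENNReal.ofReal (t ^ (-s * p - 1)) * ∫⁻ _ in W, ENNReal.ofReal ((m * t ^ s) ^ p) ∂μ := by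
        rw [setLIntegral_const, ← rpow_neg_mul_sub_one_mul_mul_rpow ht hm p,
          ENNReal.ofReal_mul (by positivity), mul_assoc]
    _ ≤ ENNReal.ofReal (t ^ (-s * p - 1)) * ∫⁻ x in W, ENNReal.ofReal (u x t ^ p) ∂μ :=
        mul_le_mul_right (setLIntegral_mono' hW fun x hx => by gcongr; exact hbound x hx) _
    _ ≤ ENNReal.ofReal (t ^ (-s * p - 1)) * ∫⁻ x, ENNReal.ofReal (u x t ^ p) ∂μ := by
        gcongr; exact Measure.restrict_le_self

theorem limsup_le_fractionalSup_rpow (hu : ∀ x t, 0 ≤ u x t) (hs : 0 < s) {c : ℝ} (hc : 0 < c)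
    (hfin : fractionalEnergy μ u s 1 ≠ ⊤) :
    limsup (fun p => (ENNReal.ofReal (p * c) * fractionalEnergy μ u s p) ^ (1 / (s * p)))
        atTop ≤ fractionalSup u s ^ (1 / s) := by
  by_cases hsup : fractionalSup u s = ⊤
  · rw [hsup, ENNReal.top_rpow_of_pos (one_div_pos.mpr hs)]
    exact le_top
  set M := (fractionalSup u s).toReal
  -- the `+ 1` keeps the constant nonzero even if the energy at `p = 1` vanishes
  have hlim := tendsto_ofReal_mul_rpow_add_mul_rpow_one_div hc hs (a := M)
    ENNReal.toReal_nonneg (-1) (K := fractionalEnergy μ u s 1 + 1) (by simp) (by simpa using hfin)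
  rw [ENNReal.ofReal_toReal hsup] at hlim
  refine (limsup_le_limsup ?_).trans hlim.limsup_eq.le
  filter_upwards [eventually_ge_atTop 1] with p hp
  gcongr
  calc fractionalEnergy μ u s p ≤ ENNReal.ofReal (M ^ (p - 1)) * fractionalEnergy μ u s 1 :=
        fractionalEnergy_le_rpow_mul_fractionalEnergy_one hu
          (fun x _ ht => le_toReal_fractionalSup_mul_rpow hsup x ht) hp
    _ ≤ ENNReal.ofReal (M ^ (p + -1)) * (fractionalEnergy μ u s 1 + 1) := by
        rw [← sub_eq_add_neg]; gcongr; exact le_self_add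

end

section

variable {X : Type*} [TopologicalSpace X] [MeasurableSpace X] [OpensMeasurableSpace X]
  (μ : Measure X) [IsLocallyFiniteMeasure μ] [μ.IsOpenPosMeasure] {u : X → ℝ → ℝ} {s : ℝ}

theorem exists_ofReal_rpow_mul_le_fractionalEnergy {x₀ : X} {t₀ m : ℝ}
    (hu : ContinuousAt (Function.uncurry u) (x₀, t₀)) (ht₀ : 0 < t₀) (hm : 0 ≤ m)
    (hm₀ : m < t₀ ^ (-s) * u x₀ t₀) :
    ∃ K : ℝ≥0∞, K ≠ 0 ∧ K ≠ ⊤ ∧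
      ∀ p > 0, ENNReal.ofReal (m ^ p) * K ≤ fractionalEnergy μ u s p := by
  have hev : ∀ᶠ q : X × ℝ in 𝓝 (x₀, t₀), m < q.2 ^ (-s) * u q.1 q.2 :=
    ((continuousAt_snd.rpow_const (Or.inl ht₀.ne')).mul hu).eventually_const_lt hm₀
  rw [nhds_prod_eq] at hev
  obtain ⟨P, hP, Q, hQ, hPQ⟩ := eventually_prod_iff.mp hev
  obtain ⟨U, hUP, hUo, hx₀U⟩ := mem_nhds_iff.mp hP
  obtain ⟨V, hx₀V, hVo, hV⟩ := μ.exists_isOpen_measure_lt_top x₀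
  obtain ⟨l, r, ⟨hl, hr⟩, hQr⟩ := mem_nhds_iff_exists_Ioo_subset.mp hQ
  have hW : 0 < μ (U ∩ V) := (hUo.inter hVo).measure_pos μ ⟨x₀, hx₀U, hx₀V⟩
  refine ⟨μ (U ∩ V) * ENNReal.ofReal ((r - t₀) / r), ?_, ?_, fun p hp => ?_⟩
  · exact mul_ne_zero hW.ne' (ENNReal.ofReal_pos.mpr (div_pos (by linarith) (by linarith))).ne'
  · exact ENNReal.mul_ne_top ((measure_mono inter_subset_right).trans_lt hV).ne
      ENNReal.ofReal_ne_top
  have hbound : ∀ t ∈ Ioo t₀ r, ∀ x ∈ U, m * t ^ s ≤ u x t := fun t ht x hx => by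
    have h := hPQ (hUP hx) (hQr ⟨hl.trans ht.1, ht.2⟩)
    rw [Real.rpow_neg (ht₀.trans ht.1).le, inv_mul_eq_div,
      lt_div_iff₀ (Real.rpow_pos_of_pos (ht₀.trans ht.1) s)] at h
    exact h.le
  have hslice : ∀ t ∈ Ioo t₀ r, ENNReal.ofReal (m ^ p * r⁻¹) * μ (U ∩ V) ≤
      ENNReal.ofReal (t ^ (-s * p - 1)) * ∫⁻ x, ENNReal.ofReal (u x t ^ p) ∂μ := by
    intro t ht
    have htpos : 0 < t := ht₀.trans ht.1
    exact le_trans (by gcongr; exact ht.2.le)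
      (ofReal_rpow_mul_inv_mul_measure_le_mul_lintegral (hUo.inter hVo).measurableSet
        htpos hm hp.le fun x hx => hbound t ht x hx.1)
  calc ENNReal.ofReal (m ^ p) * (μ (U ∩ V) * ENNReal.ofReal ((r - t₀) / r))
      = ∫⁻ _ in Ioo t₀ r, ENNReal.ofReal (m ^ p * r⁻¹) * μ (U ∩ V) := by
        rw [setLIntegral_const, Real.volume_Ioo, div_eq_mul_inv,
          ENNReal.ofReal_mul (p := m ^ p) (by positivity),
          ENNReal.ofReal_mul (p := r - t₀) (by linarith)]
        ring
    _ ≤ ∫⁻ t in Ioo t₀ r,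
          ENNReal.ofReal (t ^ (-s * p - 1)) * ∫⁻ x, ENNReal.ofReal (u x t ^ p) ∂μ :=
        setLIntegral_mono' measurableSet_Ioo hslice
    _ ≤ fractionalEnergy μ u s p := lintegral_mono_set fun t ht => ht₀.trans ht.1

theorem fractionalSup_rpow_le_liminf (hu : Continuous (Function.uncurry u)) (hs : 0 < s)
    {c : ℝ} (hc : 0 < c) :
    fractionalSup u s ^ (1 / s) ≤
      liminf (fun p => (ENNReal.ofReal (p * c) * fractionalEnergy μ u s p) ^ (1 / (s * p)))
        atTop := by
  refine le_of_forall_lt fun b hb => ?_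
  rw [one_div, ENNReal.lt_rpow_inv_iff hs, fractionalSup] at hb
  obtain ⟨x₀, hb⟩ := lt_iSup_iff.mp hb
  obtain ⟨⟨t₀, ht₀⟩, hb⟩ := lt_iSup_iff.mp hb
  obtain ⟨m, -, hbm, hm⟩ := ENNReal.lt_iff_exists_real_btwn.mp hb
  have hm0 : 0 < m := ENNReal.ofReal_pos.mp (pos_of_gt hbm)
  obtain ⟨K, hK0, hK, hle⟩ := exists_ofReal_rpow_mul_le_fractionalEnergy μ hu.continuousAt ht₀
    hm0.le (ENNReal.ofReal_lt_ofReal_iff'.mp hm).1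
  have hlim := tendsto_ofReal_mul_rpow_add_mul_rpow_one_div hc hs hm0.le 0 hK0 hK
  simp only [add_zero] at hlim
  calc b < ENNReal.ofReal m ^ (1 / s) := by rwa [one_div, ENNReal.lt_rpow_inv_iff hs]
    _ = liminf (fun p => (ENNReal.ofReal (p * c) * (ENNReal.ofReal (m ^ p) * K)) ^ (1 / (s * p)))
          atTop := hlim.liminf_eq.symm
    _ ≤ _ := liminf_le_liminf <| by
      filter_upwards [eventually_gt_atTop 0] with p hp
      gcongr
      exact hle p hp

theorem tendsto_fractionalEnergy_rpow (hu₀ : ∀ x t, 0 ≤ u x t)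
    (hu : Continuous (Function.uncurry u)) (hs : 0 < s) {c : ℝ} (hc : 0 < c)
    (hfin : fractionalEnergy μ u s 1 ≠ ⊤) :
    Tendsto (fun p => (ENNReal.ofReal (p * c) * fractionalEnergy μ u s p) ^ (1 / (s * p)))
      atTop (𝓝 (fractionalSup u s ^ (1 / s))) :=
  tendsto_of_le_liminf_of_limsup_le (fractionalSup_rpow_le_liminf μ hu hs hc)
    (limsup_le_fractionalSup_rpow hu₀ hs hc hfin)

end

theorem fractional_gauge_tendsto_linfty_general {n : ℕ}
    (f : EuclideanSpace ℝ (Fin n) → ℝ) (L : ℝ≥0)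
    (hlip : LipschitzWith L f)
    (s : ℝ) (hs : s ∈ Ioo (0:ℝ) 1)
    (ξ : EuclideanSpace ℝ (Fin n))
    (hfin : (∫⁻ t in Ioi (0:ℝ), ENNReal.ofReal (t ^ (-s - 1)) *
        ∫⁻ x, ENNReal.ofReal |f (x + t • ξ) - f x|) ≠ ⊤) :
    Tendsto
      (fun p : ℝ =>
        (ENNReal.ofReal (p * (1 - s)) *
            ∫⁻ t in Ioi (0:ℝ), ENNReal.ofReal (t ^ (-s * p - 1)) *
              ∫⁻ x, ENNReal.ofReal (|f (x + t • ξ) - f x| ^ p)) ^ (1 / (s * p)))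
      atTop
      (nhds ((⨆ (x : EuclideanSpace ℝ (Fin n)) (t : {t : ℝ // 0 < t}),
          ENNReal.ofReal ((t : ℝ) ^ (-s) * |f (x + (t : ℝ) • ξ) - f x|)) ^ (1 / s))) := by
  have hcont : Continuous (Function.uncurry fun x (t : ℝ) => |f (x + t • ξ) - f x|) := by
    have := hlip.continuous
    fun_prop
  exact tendsto_fractionalEnergy_rpow volume (fun _ _ => abs_nonneg _) hcont hs.1
    (sub_pos.mpr hs.2) (by rwa [fractionalEnergy_one])

/-- Fix `s ∈ (0,1)` and `f ∈ W^{1,1}(ℝⁿ) ∩ W^{1,∞}(ℝⁿ)`. For those unit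
vectors `ξ` with `∫_0^∞ t^{−s−1} ∫ |f(x+tξ)−f(x)| dx dt < ∞` (which is a.e. `ξ ∈ S^{n−1}`),
the gauge of the `s`-fractional `L^p` polar projection body converges as `p → ∞` to the
gauge of the `s`-fractional `L^∞` polar projection body:
`lim_{p→∞} (p(1−s) ∫_0^∞ t^{−sp−1} ∫ |f(x+tξ)−f(x)|^p dx dt)^{1/(sp)}
  = (sup_{x,t>0} t^{−s}|f(x+tξ)−f(x)|)^{1/s}`. -/
theorem fractional_gauge_tendsto_linfty {n : ℕ}
    (f : EuclideanSpace ℝ (Fin n) → ℝ) (L : ℝ≥0)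
    (hf1 : Integrable f) (hlip : LipschitzWith L f) (hd : Differentiable ℝ f)
    (hg1 : Integrable (fun x => fderiv ℝ f x))
    (s : ℝ) (hs : s ∈ Ioo (0:ℝ) 1)
    (ξ : EuclideanSpace ℝ (Fin n)) (hξ : ‖ξ‖ = 1)
    (hfin : (∫⁻ t in Ioi (0:ℝ), ENNReal.ofReal (t ^ (-s - 1)) *
        ∫⁻ x, ENNReal.ofReal |f (x + t • ξ) - f x|) ≠ ⊤) :
    Tendsto
      (fun p : ℝ =>
        (ENNReal.ofReal (p * (1 - s)) *
            ∫⁻ t in Ioi (0:ℝ), ENNReal.ofReal (t ^ (-s * p - 1)) *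
              ∫⁻ x, ENNReal.ofReal (|f (x + t • ξ) - f x| ^ p)) ^ (1 / (s * p)))
      atTop
      (nhds ((⨆ (x : EuclideanSpace ℝ (Fin n)) (t : {t : ℝ // 0 < t}),
          ENNReal.ofReal ((t : ℝ) ^ (-s) * |f (x + (t : ℝ) • ξ) - f x|)) ^ (1 / s))) :=
  fractional_gauge_tendsto_linfty_general f L hlip s hs ξ hfin
end

section
/- Let f ∈ W^{1,1}(R^n) ∩ W^{1,∞}(R^n) be nonzero. For every ξ ∈ S^{n−1}, the s-fractional L^∞ gauge converges to the L^∞ gauge as s → 1⁻: lim_{s→1⁻} (sup_{x ∈ R^n, t > 0} t^{−s}|f(x+tξ)−f(x)|)^{1/s} = ess sup_{x ∈ R^n} |⟨∇f(x), ξ⟩|. -/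
/-!
Write `a = |f (x + t • ξ) - f x|` and `M = sup a / t`. As `f` is Lipschitz and, being integrable,
bounded, say by `B / 2`, we have `a ≤ min (M t) B ≤ (M t) ^ s * B ^ (1 - s)`, so the gauge is at
most `M ^ s * B ^ (1 - s)`, whose `1 / s`-th power tends to `M`; each single quotient gives the
matching lower bound. It remains to see that `M` is the essential supremum of `|∂_ξ f|`.
Difference quotients dominate the derivative at every point. Conversely, by Fubini almost every
line `u ↦ x + u • ξ` meets the exceptional set of the derivative bound in a null set, so the
fundamental theorem of calculus bounds the quotients for a dense set of `x`, hence, by continuity,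
for all `x`.
-/

open MeasureTheory Set NNReal ENNReal Filter Topology

lemma ContinuousAt.tendsto_ofReal_rpow_one_div {g : ℝ → ℝ} (hg : ContinuousAt g 1)
    (hg0 : ∀ s, 0 ≤ g s) :
    Tendsto (fun s => ENNReal.ofReal (g s) ^ (1 / s)) (𝓝 1) (𝓝 (ENNReal.ofReal (g 1))) := by
  have hpow : ContinuousAt (fun s => g s ^ (1 / s)) 1 :=
    hg.rpow (continuousAt_const.div continuousAt_id one_ne_zero) (Or.inr (by norm_num))
  have hlim := (ENNReal.continuous_ofReal.tendsto _).comp hpow.tendsto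
  rw [Function.comp_def, div_one, Real.rpow_one] at hlim
  refine hlim.congr' ?_
  filter_upwards [lt_mem_nhds one_pos] with s hs
  exact (ENNReal.ofReal_rpow_of_nonneg (hg0 s) (by positivity)).symm

lemma rpow_neg_mul_le_rpow_mul_rpow {a t M B s : ℝ} (ha : 0 ≤ a) (ht : 0 < t)
    (haM : a ≤ M * t) (haB : a ≤ B) (hs0 : 0 ≤ s) (hs1 : s ≤ 1) :
    t ^ (-s) * a ≤ M ^ s * B ^ (1 - s) := by
  have hM : 0 ≤ M := nonneg_of_mul_nonneg_left (ha.trans haM) ht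
  have hsplit : a = a ^ s * a ^ (1 - s) := by
    rw [← Real.rpow_add' ha (by norm_num), add_sub_cancel, Real.rpow_one]
  calc t ^ (-s) * a ≤ t ^ (-s) * ((M * t) ^ s * B ^ (1 - s)) := by
        rw [hsplit]
        gcongr
    _ = M ^ s * B ^ (1 - s) := by
        rw [Real.mul_rpow hM ht.le, Real.rpow_neg ht.le]
        field_simp [(Real.rpow_pos_of_pos ht s).ne']

section
variable {ι : Type*} {t a : ι → ℝ}

lemma le_liminf_iSup_rpow_neg_mul_rpow_one_div (ht : ∀ i, 0 < t i) (ha : ∀ i, 0 ≤ a i) :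
    ⨆ i, ENNReal.ofReal (a i / t i) ≤
      liminf (fun s : ℝ => (⨆ i, ENNReal.ofReal (t i ^ (-s) * a i)) ^ (1 / s)) (𝓝[<] 1) := by
  refine iSup_le fun i => ?_
  have hcont : ContinuousAt (fun s : ℝ => t i ^ (-s) * a i) 1 :=
    ((Real.continuousAt_const_rpow (ht i).ne').comp' continuousAt_neg).mul continuousAt_const
  have hlim := (hcont.tendsto_ofReal_rpow_one_div
    fun s => mul_nonneg (Real.rpow_nonneg (ht i).le _) (ha i)).mono_left
    (nhdsWithin_le_nhds (s := Iio 1))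
  rw [Real.rpow_neg_one, ← div_eq_inv_mul] at hlim
  refine hlim.liminf_eq.symm.trans_le (liminf_le_liminf ?_)
  filter_upwards [Ioo_mem_nhdsLT zero_lt_one] with s hs
  gcongr
  · exact one_div_nonneg.2 hs.1.le
  · exact le_iSup (fun j => ENNReal.ofReal (t j ^ (-s) * a j)) i

lemma limsup_iSup_rpow_neg_mul_rpow_one_div_le {M : ℝ≥0} (ht : ∀ i, 0 < t i) (ha : ∀ i, 0 ≤ a i)
    (haM : ∀ i, a i ≤ M * t i) (hbdd : BddAbove (range a)) :
    limsup (fun s : ℝ => (⨆ i, ENNReal.ofReal (t i ^ (-s) * a i)) ^ (1 / s)) (𝓝[<] 1) ≤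
      M := by
  obtain ⟨B, hB⟩ := hbdd
  have haB : ∀ i, a i ≤ max B 1 := fun i => (hB (mem_range_self i)).trans (le_max_left _ _)
  have hB0 : (0 : ℝ) < max B 1 := lt_max_of_lt_right one_pos
  have hcont : ContinuousAt (fun s : ℝ => (M : ℝ) ^ s * max B 1 ^ (1 - s)) 1 :=
    (Real.continuousAt_const_rpow' one_ne_zero).mul
      ((Real.continuousAt_const_rpow hB0.ne').comp' (continuousAt_const.sub continuousAt_id))
  have hlim := (hcont.tendsto_ofReal_rpow_one_div fun s => by positivity).mono_left
    (nhdsWithin_le_nhds (s := Iio 1))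
  simp only [Real.rpow_one, sub_self, Real.rpow_zero, mul_one, ofReal_coe_nnreal] at hlim
  refine (limsup_le_limsup ?_).trans_eq hlim.limsup_eq
  filter_upwards [Ioo_mem_nhdsLT zero_lt_one] with s hs
  gcongr
  · exact one_div_nonneg.2 hs.1.le
  · exact iSup_le fun i => ENNReal.ofReal_le_ofReal
      (rpow_neg_mul_le_rpow_mul_rpow (ha i) (ht i) (haM i) (haB i) hs.1.le hs.2.le)

theorem tendsto_iSup_rpow_neg_mul_rpow_one_div {M : ℝ} (ht : ∀ i, 0 < t i) (ha : ∀ i, 0 ≤ a i)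
    (haM : ∀ i, a i ≤ M * t i) (hbdd : BddAbove (range a)) :
    Tendsto (fun s : ℝ => (⨆ i, ENNReal.ofReal (t i ^ (-s) * a i)) ^ (1 / s)) (𝓝[<] 1)
      (𝓝 (⨆ i, ENNReal.ofReal (a i / t i))) := by
  set G := ⨆ i, ENNReal.ofReal (a i / t i)
  have hG : G ≠ ⊤ := ne_top_of_le_ne_top ofReal_ne_top <|
    iSup_le fun i => ofReal_le_ofReal <| (div_le_iff₀ (ht i)).2 (haM i)
  have haG : ∀ i, a i ≤ G.toNNReal * t i := fun i => by
    rw [coe_toNNReal_eq_toReal, ← div_le_iff₀ (ht i), ← ofReal_le_iff_le_toReal hG]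
    exact le_iSup (fun j => ENNReal.ofReal (a j / t j)) i
  refine tendsto_of_le_liminf_of_limsup_le (le_liminf_iSup_rpow_neg_mul_rpow_one_div ht ha) ?_
  exact (limsup_iSup_rpow_neg_mul_rpow_one_div_le ht ha haG hbdd).trans_eq (coe_toNNReal hG)

end

lemma abs_sub_le_mul_of_ae_abs_deriv_le {g : ℝ → ℝ} {C a b : ℝ} (hg : Differentiable ℝ g)
    (hC : ∀ᵐ u, |deriv g u| ≤ C) (hab : a ≤ b) :
    |g b - g a| ≤ C * (b - a) := by
  have hint : IntervalIntegrable (deriv g) volume a b :=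
    (intervalIntegrable_iff_integrableOn_Ioc_of_le hab).2 <|
      (integrableOn_const measure_Ioc_lt_top.ne).mono' (measurable_deriv g).aestronglyMeasurable
        (ae_restrict_of_ae hC)
  rw [← intervalIntegral.integral_eq_sub_of_hasDerivAt (fun u _ => (hg u).hasDerivAt) hint,
    ← abs_of_nonneg (sub_nonneg.2 hab)]
  exact intervalIntegral.norm_integral_le_of_norm_le_const_ae (f := deriv g)
    (hC.mono fun u hu _ => hu)

variable {E : Type*} [NormedAddCommGroup E] [NormedSpace ℝ E]

lemma hasDerivAt_comp_add_smul {f : E → ℝ} {x ξ : E} {u : ℝ}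
    (hf : DifferentiableAt ℝ f (x + u • ξ)) :
    HasDerivAt (fun v : ℝ => f (x + v • ξ)) (fderiv ℝ f (x + u • ξ) ξ) u :=
  hf.hasFDerivAt.comp_hasDerivAt u (by simpa using ((hasDerivAt_id u).smul_const ξ).const_add x)

lemma ofReal_abs_fderiv_apply_le_iSup {f : E → ℝ} {x : E} (hf : DifferentiableAt ℝ f x) (ξ : E) :
    ENNReal.ofReal |fderiv ℝ f x ξ| ≤
      ⨆ (y : E) (t : {t : ℝ // 0 < t}), ENNReal.ofReal (|f (y + (t : ℝ) • ξ) - f y| / t) := by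
  have hderiv : HasDerivAt (fun v : ℝ => f (x + v • ξ)) (fderiv ℝ f x ξ) 0 :=
    hasDerivAt_comp_add_smul (x := x) (u := 0) (by simpa using hf) |>.congr_deriv (by simp)
  have hslope := ((ENNReal.continuous_ofReal.tendsto _).comp
    ((hasDerivAt_iff_tendsto_slope.1 hderiv).abs.mono_left
      (nhdsWithin_mono _ fun v (hv : v ∈ Ioi 0) => ne_of_gt hv)))
  refine le_of_tendsto hslope ?_
  filter_upwards [self_mem_nhdsWithin] with t (ht : 0 < t)
  refine le_iSup₂_of_le x ⟨t, ht⟩ (le_of_eq ?_)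
  simp [slope_def_field, abs_div, abs_of_pos ht]

variable [FiniteDimensional ℝ E] [MeasurableSpace E] [BorelSpace E]
  (μ : Measure E) [μ.IsAddHaarMeasure]

lemma ae_ae_add_smul {p : E → Prop} (h : ∀ᵐ y ∂μ, p y) (ξ : E) :
    ∀ᵐ x ∂μ, ∀ᵐ u : ℝ, p (x + u • ξ) := by
  obtain ⟨N, hpN, hN, hμN⟩ := exists_measurable_superset_of_null (ae_iff.1 h)
  have hline : Measurable fun q : E × ℝ => q.1 + q.2 • ξ := by fun_prop
  have hnull : (μ.prod volume) ((fun q : E × ℝ => q.1 + q.2 • ξ) ⁻¹' N) = 0 := by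
    rw [Measure.prod_apply_symm (hline hN)]
    simp [preimage_preimage, measure_preimage_add_right, hμN]
  refine Measure.ae_ae_of_ae_prod (p := fun q : E × ℝ => p (q.1 + q.2 • ξ)) ?_
  exact measure_mono_null (fun q hq => hpN hq) hnull

lemma abs_sub_le_mul_of_ae_abs_fderiv_le {f : E → ℝ} {ξ : E} {C : ℝ} (hf : Differentiable ℝ f)
    (hC : ∀ᵐ y ∂μ, |fderiv ℝ f y ξ| ≤ C) (x : E) {t : ℝ} (ht : 0 ≤ t) :
    |f (x + t • ξ) - f x| ≤ C * t := by
  have hgood : ∀ᵐ x ∂μ, ∀ t : ℝ, 0 ≤ t → |f (x + t • ξ) - f x| ≤ C * t := by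
    filter_upwards [ae_ae_add_smul μ hC ξ] with x hx t ht
    have hderiv : deriv (fun v : ℝ => f (x + v • ξ)) = fun u => fderiv ℝ f (x + u • ξ) ξ :=
      funext fun u => (hasDerivAt_comp_add_smul (hf _)).deriv
    simpa using abs_sub_le_mul_of_ae_abs_deriv_le (g := fun v : ℝ => f (x + v • ξ))
      (fun u => (hasDerivAt_comp_add_smul (hf _)).differentiableAt) (hderiv ▸ hx) ht
  have hclosed : IsClosed {x | |f (x + t • ξ) - f x| ≤ C * t} :=
    have := hf.continuous
    isClosed_le (by fun_prop) continuous_const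
  have hdense : Dense {x | |f (x + t • ξ) - f x| ≤ C * t} :=
    (Measure.dense_of_ae hgood).mono fun _ hx => by exact hx t ht
  exact hclosed.closure_subset (hdense x)

lemma iSup_le_essSup_abs_fderiv {f : E → ℝ} (hf : Differentiable ℝ f) (ξ : E) :
    ⨆ (x : E) (t : {t : ℝ // 0 < t}), ENNReal.ofReal (|f (x + (t : ℝ) • ξ) - f x| / t) ≤
      essSup (fun x => ENNReal.ofReal |fderiv ℝ f x ξ|) μ := by
  set m := essSup (fun x => ENNReal.ofReal |fderiv ℝ f x ξ|) μ
  rcases eq_or_ne m ⊤ with hm | hm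
  · exact hm ▸ le_top
  have hC : ∀ᵐ y ∂μ, |fderiv ℝ f y ξ| ≤ m.toReal :=
    (ENNReal.ae_le_essSup _).mono fun y hy => (ofReal_le_iff_le_toReal hm).1 hy
  refine iSup₂_le fun x t => (ofReal_le_iff_le_toReal hm).2 ?_
  exact (div_le_iff₀ t.2).2 (abs_sub_le_mul_of_ae_abs_fderiv_le μ hf hC x t.2.le)

theorem iSup_eq_essSup_abs_fderiv {f : E → ℝ} (hf : Differentiable ℝ f) (ξ : E) :
    ⨆ (x : E) (t : {t : ℝ // 0 < t}), ENNReal.ofReal (|f (x + (t : ℝ) • ξ) - f x| / t) =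
      essSup (fun x => ENNReal.ofReal |fderiv ℝ f x ξ|) μ :=
  (iSup_le_essSup_abs_fderiv μ hf ξ).antisymm <| essSup_le_of_ae_le _ <|
    .of_forall fun x => ofReal_abs_fderiv_apply_le_iSup (hf x) ξ

lemma LipschitzWith.exists_abs_le_of_integrable {f : E → ℝ} {L : ℝ≥0} (hlip : LipschitzWith L f)
    (hf : Integrable f μ) : ∃ C, ∀ x, |f x| ≤ C := by
  set c := μ.real (Metric.ball (0 : E) 1)
  have hc : 0 < c := ENNReal.toReal_pos (Metric.measure_ball_pos μ _ one_pos).ne'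
    measure_ball_lt_top.ne
  refine ⟨L + (∫ y, |f y| ∂μ) / c, fun x => ?_⟩
  have hnear : ∀ y ∈ Metric.ball x 1, |f x| - L ≤ |f y| := fun y hy => by
    have hxy : |f x - f y| ≤ L := by
      simpa [Real.dist_eq] using (hlip.dist_le_mul x y).trans
        (mul_le_of_le_one_right L.2 (Metric.mem_ball'.1 hy).le)
    linarith [abs_sub_abs_le_abs_sub (f x) (f y)]
  have hball : (|f x| - L) * c ≤ ∫ y, |f y| ∂μ := by
    calc (|f x| - L) * c = ∫ _ in Metric.ball x 1, (|f x| - L) ∂μ := by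
          rw [setIntegral_const, smul_eq_mul, mul_comm, measureReal_def,
            Measure.addHaar_ball_center]
          rfl
      _ ≤ ∫ y in Metric.ball x 1, |f y| ∂μ :=
          setIntegral_mono_on (integrableOn_const measure_ball_lt_top.ne) hf.abs.integrableOn
            measurableSet_ball hnear
      _ ≤ ∫ y, |f y| ∂μ := setIntegral_le_integral hf.abs (.of_forall fun y => abs_nonneg _)
  rw [← le_div_iff₀ hc] at hball
  linarith

theorem fractional_linfty_gauge_tendsto_one_general {n : ℕ}
    (f : EuclideanSpace ℝ (Fin n) → ℝ) (L : ℝ≥0)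
    (hf1 : Integrable f) (hlip : LipschitzWith L f) (hd : Differentiable ℝ f)
    (ξ : EuclideanSpace ℝ (Fin n)) :
    Tendsto
      (fun s : ℝ =>
        (⨆ (x : EuclideanSpace ℝ (Fin n)) (t : {t : ℝ // 0 < t}),
          ENNReal.ofReal ((t : ℝ) ^ (-s) * |f (x + (t : ℝ) • ξ) - f x|)) ^ (1 / s))
      (nhdsWithin 1 (Iio (1:ℝ)))
      (nhds (essSup (fun x => ENNReal.ofReal |fderiv ℝ f x ξ|) volume)) := by
  obtain ⟨C, hC⟩ := hlip.exists_abs_le_of_integrable volume hf1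
  have hline : ∀ (x : EuclideanSpace ℝ (Fin n)) (t : ℝ), 0 ≤ t →
      |f (x + t • ξ) - f x| ≤ L * ‖ξ‖ * t := fun x t ht => by
    simpa [Real.dist_eq, norm_smul, abs_of_nonneg ht, mul_comm, mul_left_comm]
      using hlip.dist_le_mul (x + t • ξ) x
  have hbdd : ∀ (x : EuclideanSpace ℝ (Fin n)) (t : ℝ), |f (x + t • ξ) - f x| ≤ 2 * C :=
    fun x t => (abs_sub _ _).trans (by linarith [hC (x + t • ξ), hC x])
  have key := tendsto_iSup_rpow_neg_mul_rpow_one_div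
    (t := fun p : EuclideanSpace ℝ (Fin n) × {t : ℝ // 0 < t} => (p.2 : ℝ))
    (a := fun p => |f (p.1 + (p.2 : ℝ) • ξ) - f p.1|) (fun p => p.2.2) (fun _ => abs_nonneg _)
    (fun p => hline p.1 p.2 p.2.2.le) ⟨2 * C, forall_mem_range.2 fun p => hbdd p.1 p.2⟩
  rw [← iSup_eq_essSup_abs_fderiv volume hd ξ]
  simpa only [iSup_prod] using key

/-- Let `f ∈ W^{1,1}(ℝⁿ) ∩ W^{1,∞}(ℝⁿ)` be nonzero. For every unit
vector `ξ`, the `s`-fractional `L^∞` gauge converges to the `L^∞` gauge as `s → 1⁻`: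
`lim_{s→1⁻} (sup_{x,t>0} t^{−s}|f(x+tξ)−f(x)|)^{1/s} = ess sup_x |⟨∇f(x), ξ⟩|`. -/
theorem fractional_linfty_gauge_tendsto_one {n : ℕ}
    (f : EuclideanSpace ℝ (Fin n) → ℝ) (L : ℝ≥0)
    (hf1 : Integrable f) (hlip : LipschitzWith L f) (hd : Differentiable ℝ f)
    (hg1 : Integrable (fun x => fderiv ℝ f x)) (hne : f ≠ 0)
    (ξ : EuclideanSpace ℝ (Fin n)) (hξ : ‖ξ‖ = 1) :
    Tendsto
      (fun s : ℝ =>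
        (⨆ (x : EuclideanSpace ℝ (Fin n)) (t : {t : ℝ // 0 < t}),
          ENNReal.ofReal ((t : ℝ) ^ (-s) * |f (x + (t : ℝ) • ξ) - f x|)) ^ (1 / s))
      (nhdsWithin 1 (Iio (1:ℝ)))
      (nhds (essSup (fun x => ENNReal.ofReal |fderiv ℝ f x ξ|) volume)) :=
  fractional_linfty_gauge_tendsto_one_general f L hf1 hlip hd ξ
end

section
/- Fix p > 1, s ∈ (0,1), ϱ > 0, and set p_s := p(1−s)+s. For f ∈ W^{1,1}(R^n) ∩ W^{1,∞}(R^n) and a unit vector ξ, one has ∫_0^ϱ ∫_{R^n} t^{−s−1} |f(x+tξ)−f(x)|^{p_s} dx dt ≤ (ϱ^{p(1−s)}/(p(1−s))) · ‖∇f‖_{L^∞}^{(p−1)(1−s)} ‖∇f‖_{L^1}. -/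
/-!
Fix `t > 0` and write `g = ‖∇f‖`. By the fundamental theorem of calculus along the segment,
`|f (x + tξ) - f x| ≤ ∫₀ᵗ g (x + τξ) dτ`, and by Fubini and translation invariance the right side
is at most `t ‖g‖_∞` for a.e. `x`. Splitting `p_s = θ + 1` with `θ = (p - 1)(1 - s)` gives
`|f (x + tξ) - f x|^{p_s} ≤ (t ‖g‖_∞)^θ ∫₀ᵗ g (x + τξ) dτ`, and integrating in `x` (Fubini and
translation invariance again) bounds the inner integral by `t^{θ+1} ‖g‖_∞^θ ‖g‖₁`. Finally
`t^{-s-1} t^{θ+1} = t^{p(1-s)-1}`, whose integral over `(0, ϱ)` is `ϱ^{p(1-s)} / (p(1-s))`.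
-/

open MeasureTheory Set NNReal ENNReal

section Translation

variable {G T : Type*} [MeasurableSpace G] [AddGroup G] [MeasurableAdd₂ G] [MeasurableSpace T]
  (μ : Measure G) [μ.IsAddRightInvariant] [SFinite μ] (ν : Measure T) [SFinite ν]
  {F : G → ℝ≥0∞} {φ : T → G}

theorem lintegral_lintegral_comp_add (hF : Measurable F) (hφ : Measurable φ) :
    ∫⁻ x, ∫⁻ τ, F (x + φ τ) ∂ν ∂μ = ν univ * ∫⁻ y, F y ∂μ := by
  rw [lintegral_lintegral_swap (f := fun x τ => F (x + φ τ)) (by fun_prop)]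
  simp_rw [lintegral_add_right_eq_self F]
  rw [lintegral_const, mul_comm]

theorem ae_lintegral_comp_add_le_mul_essSup (hF : Measurable F) (hφ : Measurable φ) :
    ∀ᵐ x ∂μ, ∫⁻ τ, F (x + φ τ) ∂ν ≤ ν univ * essSup F μ := by
  have h : ∀ᵐ x ∂μ, ∀ᵐ τ ∂ν, F (x + φ τ) ≤ essSup F μ := by
    refine (Measure.ae_ae_comm (p := fun x τ => F (x + φ τ) ≤ essSup F μ)
      (measurableSet_le (by fun_prop) measurable_const)).2 (ae_of_all _ fun τ => ?_)
    exact (measurePreserving_add_right μ (φ τ)).quasiMeasurePreserving.ae (ae_le_essSup F)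
  filter_upwards [h] with x hx
  exact (lintegral_mono_ae hx).trans_eq (by rw [lintegral_const, mul_comm])

end Translation

theorem lintegral_Ioo_ofReal_rpow {ϱ r : ℝ} (hϱ : 0 ≤ ϱ) (hr : -1 < r) :
    ∫⁻ t in Ioo 0 ϱ, ENNReal.ofReal (t ^ r) = ENNReal.ofReal (ϱ ^ (r + 1) / (r + 1)) := by
  have hint : IntegrableOn (fun t : ℝ => t ^ r) (Ioc 0 ϱ) := by
    rw [← intervalIntegrable_iff_integrableOn_Ioc_of_le hϱ]
    exact intervalIntegral.intervalIntegrable_rpow' hr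
  rw [setLIntegral_congr Ioo_ae_eq_Ioc, ← ofReal_integral_eq_lintegral_ofReal hint
    ((ae_restrict_mem measurableSet_Ioc).mono fun t ht => Real.rpow_nonneg ht.1.le r),
    ← intervalIntegral.integral_of_le hϱ, integral_rpow (Or.inl hr),
    Real.zero_rpow (by linarith), sub_zero]

theorem ofReal_abs_sub_le_lintegral_norm_fderiv {E : Type*} [NormedAddCommGroup E]
    [NormedSpace ℝ E] {f : E → ℝ} (hf : Differentiable ℝ f) (x : E) {ξ : E} (hξ : ‖ξ‖ ≤ 1)
    {t : ℝ} (ht : 0 ≤ t) :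
    ENNReal.ofReal |f (x + t • ξ) - f x|
      ≤ ∫⁻ τ in Ioc 0 t, ENNReal.ofReal ‖fderiv ℝ f (x + τ • ξ)‖ := by
  -- When the bound is finite, the directional derivative is integrable on `[0, t]`.
  by_cases hfin : ∫⁻ τ in Ioc 0 t, ENNReal.ofReal ‖fderiv ℝ f (x + τ • ξ)‖ = ∞
  · exact hfin ▸ le_top
  set D := deriv fun τ : ℝ => f (x + τ • ξ)
  have hD : ∀ τ, HasDerivAt (fun τ : ℝ => f (x + τ • ξ)) (fderiv ℝ f (x + τ • ξ) ξ) τ := by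
    intro τ
    have hline : HasDerivAt (fun τ : ℝ => x + τ • ξ) ξ τ := by
      simpa using ((hasDerivAt_id τ).smul_const ξ).const_add x
    exact (hf _).hasFDerivAt.comp_hasDerivAt τ hline
  have hD_le : ∀ τ, ‖D τ‖ₑ ≤ ENNReal.ofReal ‖fderiv ℝ f (x + τ • ξ)‖ := by
    intro τ
    rw [show D τ = _ from (hD τ).deriv, ← ofReal_norm]
    refine ENNReal.ofReal_le_ofReal ?_
    calc ‖fderiv ℝ f (x + τ • ξ) ξ‖ ≤ ‖fderiv ℝ f (x + τ • ξ)‖ * ‖ξ‖ :=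
          ContinuousLinearMap.le_opNorm _ _
      _ ≤ ‖fderiv ℝ f (x + τ • ξ)‖ := mul_le_of_le_one_right (norm_nonneg _) hξ
  have hD_int : IntegrableOn D (Ioc 0 t) :=
    ⟨(measurable_deriv _).aestronglyMeasurable,
      (lintegral_mono hD_le).trans_lt (lt_top_iff_ne_top.2 hfin)⟩
  have hftc : ∫ τ in Ioc 0 t, D τ = f (x + t • ξ) - f x := by
    rw [← intervalIntegral.integral_of_le ht, intervalIntegral.integral_deriv_eq_sub
      (fun τ _ => (hD τ).differentiableAt)
      ((intervalIntegrable_iff_integrableOn_Ioc_of_le ht).2 hD_int)]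
    simp
  calc ENNReal.ofReal |f (x + t • ξ) - f x| = ‖∫ τ in Ioc 0 t, D τ‖ₑ := by
        rw [hftc, Real.enorm_eq_ofReal_abs]
    _ ≤ ∫⁻ τ in Ioc 0 t, ‖D τ‖ₑ := enorm_integral_le_lintegral_enorm _
    _ ≤ _ := lintegral_mono hD_le

theorem lintegral_ofReal_abs_sub_rpow_le {E : Type*} [NormedAddCommGroup E] [NormedSpace ℝ E]
    [MeasurableSpace E] [BorelSpace E] [SecondCountableTopology E]
    (μ : Measure E) [μ.IsAddRightInvariant] [SFinite μ] {f : E → ℝ} (hf : Differentiable ℝ f)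
    {ξ : E} (hξ : ‖ξ‖ ≤ 1) {θ t : ℝ} (hθ : 0 ≤ θ) (ht : 0 ≤ t) :
    ∫⁻ x, ENNReal.ofReal (|f (x + t • ξ) - f x| ^ (θ + 1)) ∂μ
      ≤ ENNReal.ofReal (t ^ (θ + 1)) * essSup (fun x => ENNReal.ofReal ‖fderiv ℝ f x‖) μ ^ θ *
          ∫⁻ x, ENNReal.ofReal ‖fderiv ℝ f x‖ ∂μ := by
  set F : E → ℝ≥0∞ := fun x => ENNReal.ofReal ‖fderiv ℝ f x‖
  set M := essSup F μ
  have hF : Measurable F := ENNReal.measurable_ofReal.comp (measurable_fderiv ℝ f).norm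
  have hφ : Measurable fun τ : ℝ => τ • ξ := measurable_id.smul_const ξ
  have hM : ∀ᵐ x ∂μ, ∫⁻ τ in Ioc 0 t, F (x + τ • ξ) ≤ ENNReal.ofReal t * M := by
    simpa using ae_lintegral_comp_add_le_mul_essSup μ (volume.restrict (Ioc 0 t)) hF hφ
  have hpt : ∀ᵐ x ∂μ, ENNReal.ofReal (|f (x + t • ξ) - f x| ^ (θ + 1))
      ≤ (ENNReal.ofReal t * M) ^ θ * ∫⁻ τ in Ioc 0 t, F (x + τ • ξ) := by
    filter_upwards [hM] with x hx
    have hftc := ofReal_abs_sub_le_lintegral_norm_fderiv hf x hξ ht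
    rw [← ENNReal.ofReal_rpow_of_nonneg (abs_nonneg _) (by linarith),
      ENNReal.rpow_add_of_nonneg _ _ hθ zero_le_one, ENNReal.rpow_one]
    gcongr
    exact hftc.trans hx
  calc _ ≤ ∫⁻ x, (ENNReal.ofReal t * M) ^ θ * (∫⁻ τ in Ioc 0 t, F (x + τ • ξ)) ∂μ :=
        lintegral_mono_ae hpt
    _ = (ENNReal.ofReal t * M) ^ θ * (ENNReal.ofReal t * ∫⁻ x, F x ∂μ) := by
        rw [lintegral_const_mul _
            (Measurable.lintegral_prod_right (f := fun x τ => F (x + τ • ξ)) (by fun_prop)),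
          lintegral_lintegral_comp_add μ _ hF hφ]
        simp
    _ = _ := by
        rw [ENNReal.mul_rpow_of_nonneg _ _ hθ, ENNReal.ofReal_rpow_of_nonneg ht hθ,
          Real.rpow_add_one' ht (by linarith), ENNReal.ofReal_mul (by positivity)]
        ring

theorem near_origin_fractional_bound_general {n : ℕ}
    (f : EuclideanSpace ℝ (Fin n) → ℝ) (hd : Differentiable ℝ f)
    (p s ϱ : ℝ) (hp : 1 < p) (hs : s ∈ Ioo (0:ℝ) 1) (hϱ : 0 < ϱ)
    (ξ : EuclideanSpace ℝ (Fin n)) (hξ : ‖ξ‖ = 1) :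
    (∫⁻ t in Ioo (0:ℝ) ϱ, ENNReal.ofReal (t ^ (-s - 1)) *
        ∫⁻ x, ENNReal.ofReal (|f (x + t • ξ) - f x| ^ (p * (1 - s) + s)))
      ≤ ENNReal.ofReal (ϱ ^ (p * (1 - s)) / (p * (1 - s))) *
          (essSup (fun x => ENNReal.ofReal ‖fderiv ℝ f x‖) volume) ^ ((p - 1) * (1 - s)) *
          ∫⁻ x, ENNReal.ofReal ‖fderiv ℝ f x‖ := by
  obtain ⟨hs0, hs1⟩ := hs
  set θ := (p - 1) * (1 - s)
  set M := essSup (fun x => ENNReal.ofReal ‖fderiv ℝ f x‖) volume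
  set I := ∫⁻ x, ENNReal.ofReal ‖fderiv ℝ f x‖
  have hθ : 0 ≤ θ := mul_nonneg (by linarith) (by linarith)
  have hexp : p * (1 - s) + s = θ + 1 := by ring
  calc _ ≤ ∫⁻ t in Ioo 0 ϱ, ENNReal.ofReal (t ^ (p * (1 - s) - 1)) * (M ^ θ * I) := by
        refine setLIntegral_mono' measurableSet_Ioo fun t ht => ?_
        rw [hexp]
        calc _ ≤ ENNReal.ofReal (t ^ (-s - 1)) * (ENNReal.ofReal (t ^ (θ + 1)) * M ^ θ * I) := by
              gcongr
              exact lintegral_ofReal_abs_sub_rpow_le volume hd hξ.le hθ ht.1.le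
          _ = _ := by
              rw [mul_assoc (ENNReal.ofReal _), ← mul_assoc,
                ← ENNReal.ofReal_mul (Real.rpow_nonneg ht.1.le _), ← Real.rpow_add ht.1,
                show -s - 1 + (θ + 1) = p * (1 - s) - 1 by ring]
    _ = _ := by
        rw [lintegral_mul_const _ (by fun_prop), lintegral_Ioo_ofReal_rpow hϱ.le (by nlinarith),
          sub_add_cancel, mul_assoc]

/-- Fix `p > 1`, `s ∈ (0,1)`, `ϱ > 0`, and set `p_s := p(1−s)+s`.
For `f ∈ W^{1,1}(ℝⁿ) ∩ W^{1,∞}(ℝⁿ)` and a unit vector `ξ`,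
`∫_0^ϱ ∫ t^{−s−1}|f(x+tξ)−f(x)|^{p_s} dx dt
  ≤ (ϱ^{p(1−s)}/(p(1−s))) ‖∇f‖_{L^∞}^{(p−1)(1−s)} ‖∇f‖_{L^1}`. -/
theorem near_origin_fractional_bound {n : ℕ}
    (f : EuclideanSpace ℝ (Fin n) → ℝ) (L : ℝ≥0)
    (hf1 : Integrable f) (hlip : LipschitzWith L f) (hd : Differentiable ℝ f)
    (hg1 : Integrable (fun x => ‖fderiv ℝ f x‖))
    (p s ϱ : ℝ) (hp : 1 < p) (hs : s ∈ Ioo (0:ℝ) 1) (hϱ : 0 < ϱ)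
    (ξ : EuclideanSpace ℝ (Fin n)) (hξ : ‖ξ‖ = 1) :
    (∫⁻ t in Ioo (0:ℝ) ϱ, ENNReal.ofReal (t ^ (-s - 1)) *
        ∫⁻ x, ENNReal.ofReal (|f (x + t • ξ) - f x| ^ (p * (1 - s) + s)))
      ≤ ENNReal.ofReal (ϱ ^ (p * (1 - s)) / (p * (1 - s))) *
          (essSup (fun x => ENNReal.ofReal ‖fderiv ℝ f x‖) volume) ^ ((p - 1) * (1 - s)) *
          ∫⁻ x, ENNReal.ofReal ‖fderiv ℝ f x‖ :=
  near_origin_fractional_bound_general f hd p s ϱ hp hs hϱ ξ hξ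
end

section
/- Let K be a bounded star body in R^n containing the origin in its interior, and let f ∈ W^{1,1}(R^n) ∩ W^{1,∞}(R^n) be nonzero with directional s-Hölder constant d_s := sup_{x≠y} |f(x)−f(y)|/‖x−y‖_K^s finite. Then for each p > 1, ∫∫_{R^n×R^n} |f(x)−f(y)|^p / ‖x−y‖_K^{n+sp} dx dy ≤ d_s^{p−1} ∫∫ |f(x)−f(y)| / ‖x−y‖_K^{n+s} dx dy, and consequently limsup_{p→∞} ( p(1−s) ∫∫ |f(x)−f(y)|^p / ‖x−y‖_K^{n+sp} dx dy )^{1/p} ≤ d_s, provided the right-hand double integral is finite. -/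
open MeasureTheory Set NNReal ENNReal Filter Topology

/-!
Since `|f x - f y| ≤ d_s ‖x - y‖_K ^ s`, the `p`-integrand
`|f x - f y| ^ p / ‖x - y‖_K ^ (n + s p)` is at most `d_s ^ (p - 1)` times the `1`-integrand;
integrating gives the first claim. Hence the `p`-th root in the second claim is at most
`(p (1 - s) J) ^ (1 / p) d_s ^ ((p - 1) / p)`, which tends to `d_s` because `p ^ (1 / p) → 1`
and `a ^ (1 / p) → 1` for every `a > 0`.
-/

theorem rpow_div_rpow_le_rpow_sub_one_mul {u g d s t p : ℝ} (hu : 0 ≤ u) (hg : 0 < g)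
    (hd : u / g ^ s ≤ d) (hp : 1 ≤ p) :
    u ^ p / g ^ (t + s * p) ≤ d ^ (p - 1) * (u / g ^ (t + s)) := by
  have split : u ^ p / g ^ (t + s * p) = (u / g ^ s) ^ (p - 1) * (u / g ^ (t + s)) := by
    rw [Real.div_rpow hu (Real.rpow_nonneg hg.le s), ← Real.rpow_mul hg.le, div_mul_div_comm,
      ← Real.rpow_add_one' hu (by linarith), ← Real.rpow_add hg, sub_add_cancel]
    congr 2
    ring
  rw [split]
  gcongr

section HolderConst

variable {E : Type*} [AddGroup E]

/-- The constant `d_s`. If the set is not bounded above, `sSup` returns the junk value `0`. -/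
noncomputable def gaugeHolderConst (f gK : E → ℝ) (s : ℝ) : ℝ :=
  sSup {r : ℝ | ∃ x y : E, x ≠ y ∧ r = |f x - f y| / gK (x - y) ^ s}

variable {f gK : E → ℝ} {s : ℝ}

theorem gaugeHolderConst_nonneg (hgK : ∀ z, z ≠ 0 → 0 < gK z) :
    0 ≤ gaugeHolderConst f gK s := by
  apply Real.sSup_nonneg
  rintro r ⟨x, y, hxy, rfl⟩
  have := hgK (x - y) (sub_ne_zero.mpr hxy)
  positivity

theorem le_gaugeHolderConst
    (hbdd : BddAbove {r : ℝ | ∃ x y : E, x ≠ y ∧ r = |f x - f y| / gK (x - y) ^ s})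
    {x y : E} (hxy : x ≠ y) : |f x - f y| / gK (x - y) ^ s ≤ gaugeHolderConst f gK s :=
  le_csSup hbdd ⟨x, y, hxy, rfl⟩

theorem lintegral_gagliardo_le_gaugeHolderConst_rpow_mul [MeasurableSpace E]
    (μ : Measure (E × E)) {p : ℝ} (t : ℝ)
    (hgK : ∀ z, z ≠ 0 → 0 < gK z)
    (hbdd : BddAbove {r : ℝ | ∃ x y : E, x ≠ y ∧ r = |f x - f y| / gK (x - y) ^ s})
    (hp : 1 ≤ p) :
    ∫⁻ z, ENNReal.ofReal (|f z.1 - f z.2| ^ p / gK (z.1 - z.2) ^ (t + s * p)) ∂μ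
      ≤ ENNReal.ofReal (gaugeHolderConst f gK s) ^ (p - 1) *
        ∫⁻ z, ENNReal.ofReal (|f z.1 - f z.2| / gK (z.1 - z.2) ^ (t + s)) ∂μ := by
  have hd0 : 0 ≤ gaugeHolderConst f gK s := gaugeHolderConst_nonneg hgK
  rw [← lintegral_const_mul' _ _ (rpow_ne_top_of_nonneg (by linarith) ofReal_ne_top)]
  refine lintegral_mono fun z => ?_
  rw [ENNReal.ofReal_rpow_of_nonneg hd0 (by linarith), ← ENNReal.ofReal_mul (by positivity)]
  refine ENNReal.ofReal_le_ofReal ?_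
  by_cases hz : z.1 = z.2
  · rw [hz, sub_self, abs_zero, Real.zero_rpow (by linarith), zero_div, zero_div, mul_zero]
  · exact rpow_div_rpow_le_rpow_sub_one_mul (abs_nonneg _) (hgK _ (sub_ne_zero.mpr hz))
      (le_gaugeHolderConst hbdd hz) hp

end HolderConst

theorem tendsto_mul_mul_rpow_sub_one_rpow_one_div {a d : ℝ} (ha : 0 < a) (hd : 0 ≤ d) :
    Tendsto (fun p : ℝ => (p * a * d ^ (p - 1)) ^ (1 / p)) atTop (𝓝 d) := by
  have hinv : Tendsto (fun p : ℝ => 1 / p) atTop (𝓝 0) := by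
    simpa using tendsto_inv_atTop_zero (𝕜 := ℝ)
  have ha' : Tendsto (fun p : ℝ => a ^ (1 / p)) atTop (𝓝 1) := by
    simpa [Function.comp_def] using (Real.continuousAt_const_rpow ha.ne').tendsto.comp hinv
  have hd' : Tendsto (fun p : ℝ => d ^ ((p - 1) * (1 / p))) atTop (𝓝 d) := by
    have hexp : Tendsto (fun p : ℝ => (p - 1) * (1 / p)) atTop (𝓝 1) := by
      have h := (tendsto_const_nhds (x := (1 : ℝ))).sub hinv
      rw [sub_zero] at h
      refine h.congr' ?_
      filter_upwards [eventually_gt_atTop 0] with p hp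
      field_simp
    simpa [Function.comp_def] using (Real.continuousAt_const_rpow' one_ne_zero).tendsto.comp hexp
  have hlim := (tendsto_rpow_div.mul ha').mul hd'
  rw [one_mul, one_mul] at hlim
  refine hlim.congr' ?_
  filter_upwards [eventually_ge_atTop 1] with p hp
  rw [Real.mul_rpow (by positivity) (Real.rpow_nonneg hd _),
    Real.mul_rpow (by linarith) ha.le, Real.rpow_mul hd]

theorem limsup_ofReal_mul_mul_rpow_sub_one_rpow_one_div_le {A : ℝ≥0∞} (hA : A ≠ ⊤)
    {d : ℝ} (hd : 0 ≤ d) :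
    limsup (fun p : ℝ => (ENNReal.ofReal p * A * ENNReal.ofReal d ^ (p - 1)) ^ (1 / p)) atTop
      ≤ ENNReal.ofReal d := by
  -- Bounding `A` by `A + 1 > 0` avoids a separate case `A = 0`.
  have hA1 : A + 1 ≠ ⊤ := by simpa using hA
  have ha : 0 < (A + 1).toReal := ENNReal.toReal_pos (by simp) hA1
  calc limsup _ atTop
      ≤ limsup (fun p : ℝ => ENNReal.ofReal ((p * (A + 1).toReal * d ^ (p - 1)) ^ (1 / p)))
          atTop := by
        refine limsup_le_limsup ?_
        filter_upwards [eventually_ge_atTop 1] with p hp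
        rw [← ENNReal.ofReal_rpow_of_nonneg (by positivity) (by positivity),
          ENNReal.ofReal_mul (by positivity), ENNReal.ofReal_mul (by linarith),
          ENNReal.ofReal_toReal hA1, ← ENNReal.ofReal_rpow_of_nonneg hd (by linarith)]
        gcongr
        exact le_self_add
    _ = ENNReal.ofReal d :=
        ((ENNReal.continuous_ofReal.tendsto d).comp
          (tendsto_mul_mul_rpow_sub_one_rpow_one_div ha hd)).limsup_eq

theorem anisotropic_holder_limsup_general {n : ℕ}
    (f : EuclideanSpace ℝ (Fin n) → ℝ)
    (s : ℝ)
    (gK : EuclideanSpace ℝ (Fin n) → ℝ) (c C : ℝ) (hc : 0 < c)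
    (hK : ∀ z, c * ‖z‖ ≤ gK z ∧ gK z ≤ C * ‖z‖)
    (hbdd : BddAbove {r : ℝ | ∃ x y : EuclideanSpace ℝ (Fin n),
      x ≠ y ∧ r = |f x - f y| / gK (x - y) ^ s})
    (hJ : (∫⁻ z : EuclideanSpace ℝ (Fin n) × EuclideanSpace ℝ (Fin n),
        ENNReal.ofReal (|f z.1 - f z.2| / gK (z.1 - z.2) ^ ((n : ℝ) + s))) ≠ ⊤) :
    (∀ p : ℝ, 1 < p →
      (∫⁻ z : EuclideanSpace ℝ (Fin n) × EuclideanSpace ℝ (Fin n),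
          ENNReal.ofReal (|f z.1 - f z.2| ^ p / gK (z.1 - z.2) ^ ((n : ℝ) + s * p)))
        ≤ ENNReal.ofReal (sSup {r : ℝ | ∃ x y : EuclideanSpace ℝ (Fin n),
              x ≠ y ∧ r = |f x - f y| / gK (x - y) ^ s}) ^ (p - 1) *
            ∫⁻ z : EuclideanSpace ℝ (Fin n) × EuclideanSpace ℝ (Fin n),
              ENNReal.ofReal (|f z.1 - f z.2| / gK (z.1 - z.2) ^ ((n : ℝ) + s))) ∧
    limsup
      (fun p : ℝ =>
        (ENNReal.ofReal (p * (1 - s)) *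
            ∫⁻ z : EuclideanSpace ℝ (Fin n) × EuclideanSpace ℝ (Fin n),
              ENNReal.ofReal
                (|f z.1 - f z.2| ^ p / gK (z.1 - z.2) ^ ((n : ℝ) + s * p))) ^ (1 / p))
      atTop
      ≤ ENNReal.ofReal (sSup {r : ℝ | ∃ x y : EuclideanSpace ℝ (Fin n),
          x ≠ y ∧ r = |f x - f y| / gK (x - y) ^ s}) := by
  have hgK : ∀ z, z ≠ 0 → 0 < gK z := fun z hz =>
    (mul_pos hc (norm_pos_iff.mpr hz)).trans_le (hK z).1
  have henergy := fun p (hp : 1 ≤ p) =>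
    lintegral_gagliardo_le_gaugeHolderConst_rpow_mul volume (n : ℝ) hgK hbdd hp
  refine ⟨fun p hp => henergy p hp.le, ?_⟩
  refine (limsup_le_limsup ?_).trans (limsup_ofReal_mul_mul_rpow_sub_one_rpow_one_div_le
    (mul_ne_top (ofReal_ne_top (r := 1 - s)) hJ) (gaugeHolderConst_nonneg hgK))
  filter_upwards [eventually_ge_atTop 1] with p hp
  rw [ENNReal.ofReal_mul (by linarith)]
  calc _ ≤ (ENNReal.ofReal p * ENNReal.ofReal (1 - s) *
        (ENNReal.ofReal (gaugeHolderConst f gK s) ^ (p - 1) *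
          ∫⁻ z : EuclideanSpace ℝ (Fin n) × EuclideanSpace ℝ (Fin n),
            ENNReal.ofReal (|f z.1 - f z.2| / gK (z.1 - z.2) ^ ((n : ℝ) + s)))) ^ (1 / p) := by
        gcongr
        exact henergy p hp
    _ = _ := by rw [mul_comm (_ ^ (p - 1)), ← mul_assoc, mul_assoc (ENNReal.ofReal p)]; rfl

/-- Let `K` be a bounded star body in `ℝⁿ` with `0` in its interior,
formalized via its gauge `gK` satisfying `c‖z‖ ≤ gK z ≤ C‖z‖` with `0 < c ≤ C`, and let
`f ∈ W^{1,1} ∩ W^{1,∞}` be nonzero with finite anisotropic `s`-Hölder constant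
`d_s = sup_{x≠y} |f(x)−f(y)|/gK(x−y)^s`. Then for each `p > 1`,
`∬ |f(x)−f(y)|^p / gK(x−y)^{n+sp} ≤ d_s^{p−1} ∬ |f(x)−f(y)| / gK(x−y)^{n+s}`, and,
provided the latter double integral is finite,
`limsup_{p→∞} (p(1−s) ∬ |f(x)−f(y)|^p / gK(x−y)^{n+sp})^{1/p} ≤ d_s`. -/
theorem anisotropic_holder_limsup {n : ℕ}
    (f : EuclideanSpace ℝ (Fin n) → ℝ) (L : ℝ≥0)
    (hf1 : Integrable f) (hlip : LipschitzWith L f) (hne : f ≠ 0)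
    (s : ℝ) (hs : s ∈ Ioo (0:ℝ) 1)
    (gK : EuclideanSpace ℝ (Fin n) → ℝ) (c C : ℝ) (hc : 0 < c) (hcC : c ≤ C)
    (hK : ∀ z, c * ‖z‖ ≤ gK z ∧ gK z ≤ C * ‖z‖)
    (hbdd : BddAbove {r : ℝ | ∃ x y : EuclideanSpace ℝ (Fin n),
      x ≠ y ∧ r = |f x - f y| / gK (x - y) ^ s})
    (hJ : (∫⁻ z : EuclideanSpace ℝ (Fin n) × EuclideanSpace ℝ (Fin n),
        ENNReal.ofReal (|f z.1 - f z.2| / gK (z.1 - z.2) ^ ((n : ℝ) + s))) ≠ ⊤) :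
    (∀ p : ℝ, 1 < p →
      (∫⁻ z : EuclideanSpace ℝ (Fin n) × EuclideanSpace ℝ (Fin n),
          ENNReal.ofReal (|f z.1 - f z.2| ^ p / gK (z.1 - z.2) ^ ((n : ℝ) + s * p)))
        ≤ ENNReal.ofReal (sSup {r : ℝ | ∃ x y : EuclideanSpace ℝ (Fin n),
              x ≠ y ∧ r = |f x - f y| / gK (x - y) ^ s}) ^ (p - 1) *
            ∫⁻ z : EuclideanSpace ℝ (Fin n) × EuclideanSpace ℝ (Fin n),
              ENNReal.ofReal (|f z.1 - f z.2| / gK (z.1 - z.2) ^ ((n : ℝ) + s))) ∧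
    limsup
      (fun p : ℝ =>
        (ENNReal.ofReal (p * (1 - s)) *
            ∫⁻ z : EuclideanSpace ℝ (Fin n) × EuclideanSpace ℝ (Fin n),
              ENNReal.ofReal
                (|f z.1 - f z.2| ^ p / gK (z.1 - z.2) ^ ((n : ℝ) + s * p))) ^ (1 / p))
      atTop
      ≤ ENNReal.ofReal (sSup {r : ℝ | ∃ x y : EuclideanSpace ℝ (Fin n),
          x ≠ y ∧ r = |f x - f y| / gK (x - y) ^ s}) :=
  anisotropic_holder_limsup_general f s gK c C hc hK hbdd hJ
end
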